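/- Let η ∈ (0,1), let A be a real n×n matrix with spectral radius ρ(A), and let P̄ ⪰ 0. If η ρ(A)² < 1, then the series Σ_{k=0}^∞ η^k tr(f^k(P̄)) converges, where f(X) = A X Aᵀ + Q with Q ⪰ 0. -/

import Mathlib

/-!
Unrolling the recursion, `f^[k] P̄ = A^k P̄ (Aᵀ)^k + ∑_{j<k} A^j Q (Aᵀ)^j`. Choose `r` with
`max ρ(A) 1 < r` and `η r² < 1`. Gelfand's formula gives `‖A^k‖ = O(r^k)` in the Frobenius norm,
which is submultiplicative and unchanged by transposition and by the inclusion `ℝ ⊆ ℂ`; hence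
`‖η^k f^[k] P̄‖ = O(k (η r²)^k)`, a summable bound, and the trace is continuous and additive.
-/

open Matrix Filter Asymptotics Finset
open scoped Matrix.Norms.Frobenius

theorem iterate_mul_mul_add {R : Type*} [Semiring R] (a b q p : R) (k : ℕ) :
    (fun x => a * x * b + q)^[k] p = a ^ k * p * b ^ k + ∑ j ∈ range k, a ^ j * q * b ^ j := by
  induction k with
  | zero => simp
  | succ k ih =>
    rw [Function.iterate_succ_apply', ih, sum_range_succ', mul_add, add_mul, mul_sum, sum_mul]
    simp only [pow_succ, pow_zero, one_mul, mul_one, mul_assoc, pow_mul_comm', add_assoc]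

section NormedRing

variable {R : Type*} [NormedRing R]

theorem norm_iterate_mul_mul_add_le {a b q p : R} {C s : ℝ} (hs : 1 ≤ s)
    (hab : ∀ k : ℕ, ‖a ^ k‖ * ‖b ^ k‖ ≤ C * s ^ k) (k : ℕ) :
    ‖(fun x => a * x * b + q)^[k] p‖ ≤ C * (‖p‖ + k * ‖q‖) * s ^ k := by
  have hC : 0 ≤ C := by simpa using (mul_nonneg (norm_nonneg _) (norm_nonneg _)).trans (hab 0)
  have hterm (x : R) (j : ℕ) : ‖a ^ j * x * b ^ j‖ ≤ C * s ^ j * ‖x‖ :=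
    calc ‖a ^ j * x * b ^ j‖ ≤ ‖a ^ j‖ * ‖b ^ j‖ * ‖x‖ :=
          norm_mul₃_le.trans_eq (mul_right_comm _ _ _)
      _ ≤ C * s ^ j * ‖x‖ := mul_le_mul_of_nonneg_right (hab j) (norm_nonneg x)
  rw [iterate_mul_mul_add]
  calc _ ≤ ‖a ^ k * p * b ^ k‖ + ∑ j ∈ range k, ‖a ^ j * q * b ^ j‖ :=
        (norm_add_le _ _).trans (by gcongr; exact norm_sum_le _ _)
    _ ≤ C * s ^ k * ‖p‖ + ∑ j ∈ range k, C * s ^ k * ‖q‖ := by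
        gcongr with j hj
        · exact hterm p k
        · exact (hterm q j).trans (by gcongr; exact (mem_range.1 hj).le)
    _ = C * (‖p‖ + k * ‖q‖) * s ^ k := by simp only [sum_const, card_range, nsmul_eq_mul]; ring

theorem summable_smul_iterate_mul_mul_add [NormedSpace ℝ R] [CompleteSpace R] {a b q p : R}
    {C s η : ℝ} (hs : 1 ≤ s) (hη : 0 ≤ η) (hηs : η * s < 1)
    (hab : ∀ k : ℕ, ‖a ^ k‖ * ‖b ^ k‖ ≤ C * s ^ k) :
    Summable fun k : ℕ => η ^ k • (fun x => a * x * b + q)^[k] p := by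
  have hηs' : ‖η * s‖ < 1 := by rwa [Real.norm_of_nonneg (by positivity)]
  have hbound : Summable fun k : ℕ => C * ‖p‖ * (η * s) ^ k + C * ‖q‖ * (k * (η * s) ^ k) :=
    ((summable_geometric_of_norm_lt_one hηs').mul_left _).add
      (by simpa using (summable_pow_mul_geometric_of_norm_lt_one 1 hηs').mul_left (C * ‖q‖))
  refine hbound.of_norm_bounded fun k => ?_
  rw [norm_smul, norm_pow, Real.norm_of_nonneg hη]
  calc η ^ k * _ ≤ η ^ k * (C * (‖p‖ + k * ‖q‖) * s ^ k) := by
        gcongr; exact norm_iterate_mul_mul_add_le hs hab k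
    _ = _ := by ring

end NormedRing

theorem spectrum.isBigO_pow_of_spectralRadius_lt {A : Type*} [NormedRing A] [NormedAlgebra ℂ A]
    [CompleteSpace A] (a : A) {r : ℝ} (h : spectralRadius ℂ a < ENNReal.ofReal r) :
    (fun k : ℕ => a ^ k) =O[atTop] (fun k => r ^ k) := by
  have hr : 0 < r := ENNReal.ofReal_pos.mp (pos_of_gt h)
  refine IsBigO.of_bound' ?_
  filter_upwards [(pow_norm_pow_one_div_tendsto_nhds_spectralRadius a).eventually_lt_const h,
    eventually_gt_atTop 0] with k hk hk0
  rw [ENNReal.ofReal_lt_ofReal_iff hr, one_div,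
    Real.rpow_inv_lt_iff_of_pos (norm_nonneg _) hr.le (by positivity), Real.rpow_natCast] at hk
  rw [Real.norm_of_nonneg (by positivity)]
  exact hk.le

theorem spectrum.spectralRadius_ne_top {𝕜 A : Type*} [NormedField 𝕜] [NormedRing A]
    [NormedAlgebra 𝕜 A] [CompleteSpace A] (a : A) : spectralRadius 𝕜 a ≠ ⊤ :=
  ne_top_of_le_ne_top (by finiteness) (spectralRadius_le_pow_nnnorm_pow_one_div 𝕜 a 0)

theorem Matrix.exists_norm_pow_le_of_spectralRadius_lt {ι : Type*} [Fintype ι] [DecidableEq ι]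
    (A : Matrix ι ι ℝ) {r : ℝ} (h : (spectralRadius ℂ (A.map (Complex.ofReal ·))).toReal < r) :
    ∃ C, ∀ k : ℕ, ‖A ^ k‖ ≤ C * r ^ k := by
  have hr : 0 < r := ENNReal.toReal_nonneg.trans_lt h
  rw [← ENNReal.lt_ofReal_iff_toReal_lt (spectrum.spectralRadius_ne_top _)] at h
  obtain ⟨C, hC⟩ := (isBigO_nat_atTop_iff fun k hk => absurd hk (pow_ne_zero k hr.ne')).1
    (spectrum.isBigO_pow_of_spectralRadius_lt _ h)
  refine ⟨C, fun k => ?_⟩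
  have hmap : (A.map (Complex.ofReal ·)) ^ k = (A ^ k).map (Complex.ofReal ·) :=
    (A.map_pow Complex.ofRealHom k).symm
  have := hC k
  rwa [hmap, frobenius_norm_map_eq _ _ Complex.norm_real,
    Real.norm_of_nonneg (by positivity)] at this

theorem exists_gt_one_le_mul_sq_lt_one {η ρ : ℝ} (hη₀ : 0 < η) (hη₁ : η < 1) (hρ₀ : 0 ≤ ρ)
    (hρ : η * ρ ^ 2 < 1) : ∃ r, ρ < r ∧ 1 ≤ r ∧ η * r ^ 2 < 1 := by
  have hmax : max ρ 1 < √(1 / η) := by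
    rw [max_lt_iff, Real.lt_sqrt hρ₀, Real.lt_sqrt zero_le_one, lt_div_iff₀' hη₀,
      lt_div_iff₀' hη₀]
    exact ⟨hρ, by simpa using hη₁⟩
  obtain ⟨r, hmr, hr⟩ := exists_between hmax
  have hr₁ : 1 ≤ r := (le_max_right ρ 1).trans hmr.le
  rw [Real.lt_sqrt (by linarith), lt_div_iff₀' hη₀] at hr
  exact ⟨r, (le_max_left ρ 1).trans_lt hmr, hr₁, hr⟩

theorem stmt5_general {n : ℕ} (A Q Pbar : Matrix (Fin n) (Fin n) ℝ)
    (η : ℝ) (hη : η ∈ Set.Ioo (0 : ℝ) 1)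
    (hρ : η * ((spectralRadius ℂ (A.map (Complex.ofReal ·))).toReal) ^ 2 < 1) :
    Summable (fun k : ℕ => η ^ k * ((fun X => A * X * Aᵀ + Q)^[k] Pbar).trace) := by
  obtain ⟨r, hρr, hr₁, hηr⟩ := exists_gt_one_le_mul_sq_lt_one hη.1 hη.2 ENNReal.toReal_nonneg hρ
  obtain ⟨C, hC⟩ := A.exists_norm_pow_le_of_spectralRadius_lt hρr
  have hAAt (k : ℕ) : ‖A ^ k‖ * ‖Aᵀ ^ k‖ ≤ C ^ 2 * (r ^ 2) ^ k := by
    rw [← transpose_pow, frobenius_norm_transpose, ← sq]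
    calc ‖A ^ k‖ ^ 2 ≤ (C * r ^ k) ^ 2 := pow_le_pow_left₀ (norm_nonneg _) (hC k) 2
      _ = C ^ 2 * (r ^ 2) ^ k := by ring
  have hsum := summable_smul_iterate_mul_mul_add (one_le_pow₀ hr₁) hη.1.le hηr hAAt
    (q := Q) (p := Pbar)
  simpa only [Function.comp_def, traceAddMonoidHom_apply, trace_smul, smul_eq_mul] using
    hsum.map (traceAddMonoidHom (Fin n) ℝ) continuous_id.matrix_trace

/-- If `η ∈ (0,1)` and `η ρ(A)² < 1`, then `Σ_k η^k tr(f^[k](P̄))` converges,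
where `f(X) = A X Aᵀ + Q` with `Q, P̄ ⪰ 0`. -/
theorem stmt5 {n : ℕ} (A Q Pbar : Matrix (Fin n) (Fin n) ℝ)
    (hQ : Q.PosSemidef) (hPbar : Pbar.PosSemidef)
    (η : ℝ) (hη : η ∈ Set.Ioo (0 : ℝ) 1)
    (hρ : η * ((spectralRadius ℂ (A.map (Complex.ofReal ·))).toReal) ^ 2 < 1) :
    Summable (fun k : ℕ => η ^ k * ((fun X => A * X * Aᵀ + Q)^[k] Pbar).trace) :=
  stmt5_general A Q Pbar η hη hρ
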